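/- arXiv:1904.10880 — 3 statements merged into one kernel-verified Lean document; each statement's English description precedes it below -/
import Mathlib

section
/- If a finite set S of hyperbolic periodic saddles of stable index i_s is a skeleton of a diffeomorphism f (i.e., the union of strong stable manifolds of the orbits of points in S is dense in M, and no proper subset of S has this property), then for every p in S the closure of the stable manifold of Orb(p) has non-empty interior in M. -/
/-- If a finite set `S` of hyperbolic periodic saddles of stable index `i_s`
is a skeleton of a diffeomorphism `f` (the union of strong stable manifolds `Fs p` of the
orbits of points `p ∈ S` is dense in `M`, and no proper subset of `S` has this property),
then for every `p ∈ S` the closure of `Fs p` has non-empty interior.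
Here `M` is a compact manifold, `Saddle p` abstracts "p is a hyperbolic periodic saddle of
stable index `i_s` of `f`", and `Fs p` abstracts the strong stable manifold of `Orb(p)`. -/
theorem skeleton_closure_nonempty_interior
    {M : Type*} [TopologicalSpace M] [CompactSpace M] [T2Space M]
    (f : M → M) (Saddle : M → Prop) (Fs : M → Set M)
    (S : Finset M)
    (hSaddle : ∀ p ∈ S, Saddle p)
    (hdense : Dense (⋃ p ∈ S, Fs p))
    (hmin : ∀ T : Finset M, T ⊂ S → ¬ Dense (⋃ p ∈ T, Fs p)) :
    ∀ p ∈ S, (interior (closure (Fs p))).Nonempty := by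
  classical
  intro p hp
  by_contra h
  rw [Set.not_nonempty_iff_eq_empty] at h
  apply hmin (S.erase p) (Finset.erase_ssubset hp)
  -- univ = closure (Fs p) ∪ closure (⋃ q ∈ S.erase p, Fs q)
  have hsplit : (⋃ q ∈ S, Fs q) = Fs p ∪ ⋃ q ∈ S.erase p, Fs q := by
    rw [← Finset.insert_erase hp]
    simp [Finset.set_biUnion_insert]
  have huniv : (Set.univ : Set M) = closure (Fs p) ∪ closure (⋃ q ∈ S.erase p, Fs q) := by
    rw [← closure_union, ← hsplit, hdense.closure_eq]
  rw [dense_iff_closure_eq]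
  by_contra hne
  obtain ⟨x, hx⟩ := Set.nonempty_compl.mpr hne
  -- the complement of the closure is open, nonempty, and contained in closure (Fs p)
  have hsub : (closure (⋃ q ∈ S.erase p, Fs q))ᶜ ⊆ closure (Fs p) := by
    intro y hy
    have : y ∈ (Set.univ : Set M) := Set.mem_univ y
    rw [huniv] at this
    exact this.resolve_right hy
  have : x ∈ interior (closure (Fs p)) :=
    interior_maximal hsub (isClosed_closure.isOpen_compl) hx
  rw [h] at this
  exact this
end

section
/- Let g be partially hyperbolic with hyperbolic-time contraction constant b_0/2 and radius r_1 as in the paper: for every x ∈ H(b_0/2,g) and every y in the local fake center-unstable leaf of x of radius r_1, d(g^{-n}(x), g^{-n}(y)) ≤ e^{-n b_0/2} d(x,y) along the leaf. If x is a point whose forward orbit visits H(b_0/2,g) infinitely often, then the two-sided infinite Bowen ball B_∞(g,x,r_1/2) = {y : d(g^i x, g^i y) < r_1/2 for all i ∈ ℤ} equals {x}. -/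
/-- The two-sided iterate of an invertible map `g` (with inverse `ginv`):
`zIter g ginv i = g^i` for `i ≥ 0` and `= (g⁻¹)^{-i}` for `i < 0`. -/
def zIter {M : Type*} (g ginv : M → M) : ℤ → M → M
  | Int.ofNat n => g^[n]
  | Int.negSucc n => ginv^[n + 1]

lemma zIter_aux {M : Type*} (g ginv : M → M) (hgi : Function.LeftInverse ginv g)
    (n m : ℕ) (z : M) :
    ginv^[m] (g^[n] z) = zIter g ginv ((n : ℤ) - m) z := by
  rcases le_or_gt m n with h | h
  · have h1 : (n : ℤ) - m = Int.ofNat (n - m) := by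
      simp [Int.ofNat_eq_natCast]; omega
    rw [h1]
    show ginv^[m] (g^[n] z) = g^[n - m] z
    have : g^[n] z = g^[m] (g^[n - m] z) := by
      rw [← Function.iterate_add_apply]
      congr 1; omega
    rw [this, (hgi.iterate m) _]
  · have h1 : (n : ℤ) - m = Int.negSucc (m - n - 1) := by
      rw [Int.negSucc_eq]; push_cast; omega
    rw [h1]
    show ginv^[m] (g^[n] z) = ginv^[m - n - 1 + 1] z
    have hm : m = (m - n - 1 + 1) + n := by omega
    calc ginv^[m] (g^[n] z) = ginv^[(m - n - 1 + 1) + n] (g^[n] z) := by rw [← hm]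
      _ = ginv^[m - n - 1 + 1] (ginv^[n] (g^[n] z)) := Function.iterate_add_apply _ _ _ _
      _ = ginv^[m - n - 1 + 1] z := by rw [(hgi.iterate n) _]

/-- Let `g` be partially hyperbolic with hyperbolic-time contraction
constant `b₀/2` and radius `r₁`: for every `x ∈ H(b₀/2, g)` and every `y` in the local
fake center-unstable leaf `Fcu x r₁` of `x` of radius `r₁`, backward iterates contract:
`d(g^{-n} x, g^{-n} y) ≤ e^{-n b₀/2} d(x, y)` (hypothesis `hcontr`). Furthermore any
negative Bowen ball of radius `ε ≤ r₁/2` is contained in the fake center-unstable leaf of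
radius `2ε` (hypothesis `hBowen`, from the fake-foliation construction). If the forward
orbit of `x` visits `H(b₀/2, g)` infinitely often, then the two-sided infinite Bowen ball
`B_∞(g, x, r₁/2) = {y : d(gⁱ x, gⁱ y) < r₁/2 for all i ∈ ℤ}` equals `{x}`. -/
theorem infinite_Bowen_ball_trivial
    {M : Type*} [MetricSpace M] (g ginv : M → M)
    (hgi : Function.LeftInverse ginv g) (hig : Function.RightInverse ginv g)
    (b0 r1 : ℝ) (hb0 : 0 < b0) (hr1 : 0 < r1)
    (H : Set M) (Fcu : M → ℝ → Set M)
    (hBowen : ∀ (x : M) (ε : ℝ), 0 < ε → ε ≤ r1 / 2 →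
      {y | ∀ n : ℕ, dist (ginv^[n] x) (ginv^[n] y) < ε} ⊆ Fcu x (2 * ε))
    (hcontr : ∀ x ∈ H, ∀ y ∈ Fcu x r1, ∀ n : ℕ,
      dist (ginv^[n] x) (ginv^[n] y) ≤ Real.exp (-(n : ℝ) * b0 / 2) * dist x y)
    (x : M) (hx : ∀ N : ℕ, ∃ n ≥ N, g^[n] x ∈ H) :
    {y | ∀ i : ℤ, dist (zIter g ginv i x) (zIter g ginv i y) < r1 / 2} = {x} := by
  have hr12 : (0:ℝ) < r1 / 2 := by linarith
  ext y
  simp only [Set.mem_setOf_eq, Set.mem_singleton_iff]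
  constructor
  · intro hy
    by_contra hne
    have hd : 0 < dist x y := dist_pos.mpr fun h => hne h.symm
    set a : ℝ := Real.exp (-(b0 / 2)) with ha
    have ha0 : 0 ≤ a := Real.exp_nonneg _
    have ha1 : a < 1 := Real.exp_lt_one_iff.mpr (by linarith)
    obtain ⟨N, hN⟩ := exists_pow_lt_of_lt_one (div_pos hd hr12) ha1
    obtain ⟨n, hnN, hnH⟩ := hx N
    -- the key bound
    have hmem : g^[n] y ∈ Fcu (g^[n] x) r1 := by
      have h2 : (2 : ℝ) * (r1 / 2) = r1 := by ring
      have hmem' : g^[n] y ∈ {z | ∀ m : ℕ, dist (ginv^[m] (g^[n] x)) (ginv^[m] z) < r1 / 2} :=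
        fun m => by
          rw [zIter_aux g ginv hgi n m x, zIter_aux g ginv hgi n m y]
          exact hy _
      have := hBowen (g^[n] x) (r1 / 2) hr12 le_rfl hmem'
      rwa [h2] at this
    have hc := hcontr (g^[n] x) hnH (g^[n] y) hmem n
    have hxx : ginv^[n] (g^[n] x) = x := (hgi.iterate n) x
    have hyy : ginv^[n] (g^[n] y) = y := (hgi.iterate n) y
    rw [hxx, hyy] at hc
    have hdist_n : dist (g^[n] x) (g^[n] y) < r1 / 2 := hy (Int.ofNat n)
    have hexp : Real.exp (-(n : ℝ) * b0 / 2) = a ^ n := by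
      rw [ha, ← Real.exp_nat_mul]
      ring_nf
    have hbound : dist x y ≤ a ^ n * (r1 / 2) := by
      calc dist x y ≤ Real.exp (-(n : ℝ) * b0 / 2) * dist (g^[n] x) (g^[n] y) := hc
        _ = a ^ n * dist (g^[n] x) (g^[n] y) := by rw [hexp]
        _ ≤ a ^ n * (r1 / 2) := by
            exact mul_le_mul_of_nonneg_left hdist_n.le (pow_nonneg ha0 n)
    have hmono : a ^ n ≤ a ^ N := pow_le_pow_of_le_one ha0 ha1.le hnN
    have : a ^ N * (r1 / 2) < dist x y := by
      rw [lt_div_iff₀ hr12] at hN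
      linarith
    have : dist x y < dist x y := by
      calc dist x y ≤ a ^ n * (r1 / 2) := hbound
        _ ≤ a ^ N * (r1 / 2) := by nlinarith
        _ < dist x y := this
    exact lt_irrefl _ this
  · rintro rfl
    intro i
    simp [hr12]
end

section
/- Let g have finitely many physical measures μ_1,…,μ_k such that G(g) is the simplex generated by them, each μ_i assigns positive measure to some ball B_i contained (mod Lebesgue-null sets) in the basin of μ_i, and for Lebesgue-a.e. x every weak-* limit of the empirical measures (1/n)Σ δ_{g^i(x)} lies in G(g). Then the union of the basins of μ_1,…,μ_k has full volume in M. -/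
open MeasureTheory Filter
open scoped ENNReal

/-- The basin of an invariant measure `μ` for `g`: the set of points whose empirical
measures `(1/n) ∑_{i<n} δ_{gⁱx}` converge to `μ` in the weak-* topology (tested against
continuous functions; `M` is compact). -/
def basin {M : Type*} [TopologicalSpace M] [MeasurableSpace M]
    (g : M → M) (μ : Measure M) : Set M :=
  {x | ∀ φ : C(M, ℝ),
    Tendsto (fun n : ℕ => (∑ i ∈ Finset.range n, φ (g^[i] x)) / n)
      atTop (nhds (∫ y, φ y ∂μ))}

/-!
For almost every `x`, take a weak-* limit point `ν` of the empirical measures of `x`. By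
hypothesis `ν` is a convex combination of the `μ i`, so it charges one of the balls `B` of
`hball`; by the portmanteau theorem the orbit of `x` then enters the open set `B`. Since `g` is
nonsingular, almost every orbit avoids the null sets `B \ basin g (μ t)`, so some `gⁿ x` lies
in the basin of `μ t`, and basins are backward invariant.
-/

open Finset Topology

theorem tendsto_sum_range_div_of_tendsto_sum_range_succ_div {u : ℕ → ℝ} {c : ℝ}
    (h : Tendsto (fun n : ℕ => (∑ i ∈ range n, u (i + 1)) / n) atTop (𝓝 c)) :
    Tendsto (fun n : ℕ => (∑ i ∈ range n, u i) / n) atTop (𝓝 c) := by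
  rw [← tendsto_add_atTop_iff_nat 1]
  have hlim := (h.mul (tendsto_natCast_div_add_atTop (1 : ℝ))).add
    (tendsto_one_div_add_atTop_nhds_zero_nat.const_mul (u 0))
  rw [mul_one, mul_zero, add_zero] at hlim
  refine hlim.congr' ((eventually_ge_atTop 1).mono fun n hn => ?_)
  have hn : (n : ℝ) ≠ 0 := by positivity
  dsimp only
  rw [sum_range_succ', Nat.cast_succ]
  field_simp

section Basin

variable {M : Type*} [TopologicalSpace M] [MeasurableSpace M] {g : M → M} {μ : Measure M}

theorem mem_basin_of_apply_mem {x : M} (h : g x ∈ basin g μ) : x ∈ basin g μ := fun φ =>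
  tendsto_sum_range_div_of_tendsto_sum_range_succ_div (u := fun i => φ (g^[i] x)) <| by
    simpa only [Function.iterate_succ_apply] using h φ

theorem mem_basin_of_iterate_mem (n : ℕ) {x : M} (h : g^[n] x ∈ basin g μ) :
    x ∈ basin g μ := by
  induction n generalizing x with
  | zero => exact h
  | succ n ih => exact mem_basin_of_apply_mem (ih (by rwa [← Function.iterate_succ_apply]))

end Basin

section Empirical

variable {M : Type*} [MeasurableSpace M]

noncomputable def empiricalMeasure (g : M → M) (x : M) (n : ℕ) : Measure M :=
  (n : ℝ≥0∞)⁻¹ • ∑ i ∈ range n, Measure.dirac (g^[i] x)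

variable {g : M → M} {x : M} {n : ℕ}

theorem isProbabilityMeasure_empiricalMeasure (hn : n ≠ 0) :
    IsProbabilityMeasure (empiricalMeasure g x n) := by
  constructor
  simp [empiricalMeasure, ENNReal.inv_mul_cancel (Nat.cast_ne_zero.2 hn)]

variable [MeasurableSingletonClass M]

theorem integral_empiricalMeasure (f : M → ℝ) :
    ∫ y, f y ∂empiricalMeasure g x n = (∑ i ∈ range n, f (g^[i] x)) / n := by
  rw [empiricalMeasure, integral_smul_measure,
    integral_finsetSum_measure fun i _ => integrable_dirac enorm_lt_top]
  simp [integral_dirac, div_eq_inv_mul]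

theorem exists_iterate_mem_of_empiricalMeasure_pos {s : Set M}
    (h : 0 < empiricalMeasure g x n s) : ∃ i, g^[i] x ∈ s := by
  by_contra! hs
  simp [empiricalMeasure, Measure.dirac_apply, hs] at h

end Empirical

theorem exists_limitPoint_empiricalMeasure
    {M : Type*} [MetricSpace M] [CompactSpace M] [MeasurableSpace M] [BorelSpace M]
    (g : M → M) (x : M) :
    ∃ (ν : Measure M) (ns : ℕ → ℕ), IsProbabilityMeasure ν ∧ StrictMono ns ∧
      (∀ φ : C(M, ℝ), Tendsto (fun j => (∑ i ∈ range (ns j), φ (g^[i] x)) / ns j) atTop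
        (𝓝 (∫ y, φ y ∂ν))) ∧
      ∀ U : Set M, IsOpen U → 0 < ν U → ∃ m, g^[m] x ∈ U := by
  let P : ℕ → ProbabilityMeasure M := fun n =>
    ⟨empiricalMeasure g x (n + 1), isProbabilityMeasure_empiricalMeasure n.succ_ne_zero⟩
  obtain ⟨ν, ns, hns, hlim⟩ := CompactSpace.tendsto_subseq P
  refine ⟨ν, fun j => ns j + 1, inferInstance, fun a b hab => by simpa using hns hab,
    fun φ => ?_, fun U hU hνU => ?_⟩
  · exact (ProbabilityMeasure.tendsto_iff_forall_integral_tendsto.1 hlim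
      (BoundedContinuousFunction.mkOfCompact φ)).congr fun j => integral_empiricalMeasure φ
  · obtain ⟨j, hj⟩ := (eventually_lt_of_lt_liminf (hνU.trans_le
      (ProbabilityMeasure.le_liminf_measure_open_of_tendsto hlim hU))).exists
    exact exists_iterate_mem_of_empiricalMeasure_pos hj

theorem MeasureTheory.Measure.QuasiMeasurePreserving.ae_forall_iterate_mem_imp
    {M : Type*} [MeasurableSpace M] {vol : Measure M} {g : M → M}
    (hg : QuasiMeasurePreserving g vol vol) {s t : Set M} (hst : vol (s \ t) = 0) :
    ∀ᵐ x ∂vol, ∀ n, g^[n] x ∈ s → g^[n] x ∈ t :=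
  ae_all_iff.2 fun n => (hg.iterate n).ae (ae_le_set.2 hst)

theorem sum_ofReal_smul_measure_apply_pos {M ι : Type*} [MeasurableSpace M] [Fintype ι]
    {a : ι → ℝ} {μ : ι → Measure M} {s : Set M} {t : ι} (hat : 0 < a t) (hs : 0 < μ t s) :
    0 < (∑ i, ENNReal.ofReal (a i) • μ i) s := by
  calc 0 < ENNReal.ofReal (a t) * μ t s := ENNReal.mul_pos (ENNReal.ofReal_pos.2 hat).ne' hs.ne'
    _ ≤ ∑ i, ENNReal.ofReal (a i) * μ i s :=
      single_le_sum (f := fun i => ENNReal.ofReal (a i) * μ i s) (fun _ _ => zero_le)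
        (mem_univ t)
    _ = (∑ i, ENNReal.ofReal (a i) • μ i) s := by simp

theorem union_of_basins_full_volume_general
    {M : Type*} [MetricSpace M] [CompactSpace M] [MeasurableSpace M] [BorelSpace M]
    (g : M → M) (hg : Continuous g)
    (vol : Measure M)
    (hqc : ∀ s : Set M, MeasurableSet s → (vol s = 0 ↔ vol (g ⁻¹' s) = 0))
    (k : ℕ) (μ : Fin k → Measure M)
    (G : Set (Measure M))
    (hG : G = {ν | ∃ a : Fin k → ℝ, (∀ i, 0 ≤ a i) ∧ (∑ i, a i) = 1 ∧
      ν = ∑ i, ENNReal.ofReal (a i) • μ i})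
    (hball : ∀ i, ∃ (c : M) (r : ℝ), 0 < r ∧ 0 < μ i (Metric.ball c r) ∧
      vol (Metric.ball c r \ basin g (μ i)) = 0)
    (hlimit : ∀ᵐ x ∂vol, ∀ ν : Measure M, IsProbabilityMeasure ν →
      (∃ ns : ℕ → ℕ, StrictMono ns ∧ ∀ φ : C(M, ℝ),
        Tendsto (fun j : ℕ => (∑ i ∈ Finset.range (ns j), φ (g^[i] x)) / (ns j))
          atTop (nhds (∫ y, φ y ∂ν))) → ν ∈ G) :
    vol (⋃ i, basin g (μ i))ᶜ = 0 := by
  subst hG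
  choose c r _ hμball hnull using hball
  have hg_qmp : Measure.QuasiMeasurePreserving g vol vol :=
    ⟨hg.measurable, .mk fun s hs h0 => by
      rwa [Measure.map_apply hg.measurable hs, ← hqc s hs]⟩
  have hreturn : ∀ᵐ x ∂vol, ∀ t n, g^[n] x ∈ Metric.ball (c t) (r t) →
      g^[n] x ∈ basin g (μ t) :=
    ae_all_iff.2 fun t => hg_qmp.ae_forall_iterate_mem_imp (hnull t)
  refine measure_eq_zero_iff_ae_notMem.2 ?_
  filter_upwards [hlimit, hreturn] with x hxlimit hxreturn hxbasins
  obtain ⟨ν, ns, hν, hns, hνlim, hνorbit⟩ := exists_limitPoint_empiricalMeasure g x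
  obtain ⟨a, -, ha1, rfl⟩ := hxlimit ν hν ⟨ns, hns, hνlim⟩
  obtain ⟨t, -, hat⟩ := exists_lt_of_sum_lt (s := univ) (f := 0) (g := a) (by simp [ha1])
  obtain ⟨n, hn⟩ :=
    hνorbit _ Metric.isOpen_ball (sum_ofReal_smul_measure_apply_pos hat (hμball t))
  exact hxbasins (Set.mem_iUnion.2 ⟨t, mem_basin_of_iterate_mem n (hxreturn t n hn)⟩)

/-- Let `g` have finitely many physical measures `μ 0, …, μ (k-1)` such that
`G(g)` is the simplex generated by them (`hG`), each `μ i` assigns positive measure to some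
ball contained (mod `vol`-null sets) in the basin of `μ i` (`hball`), and for
`vol`-a.e. `x` every weak-* limit of the empirical measures of `x` lies in `G(g)`
(`hlimit`, limits along subsequences). Then the union of the basins of the `μ i` has full
volume in `M`. (`hqc` records that `g` is nonsingular with respect to the volume.) -/
theorem union_of_basins_full_volume
    {M : Type*} [MetricSpace M] [CompactSpace M] [MeasurableSpace M] [BorelSpace M]
    (g : M → M) (hg : Continuous g)
    (vol : Measure M) [IsFiniteMeasure vol]
    (hqc : ∀ s : Set M, MeasurableSet s → (vol s = 0 ↔ vol (g ⁻¹' s) = 0))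
    (k : ℕ) (hk : 1 ≤ k) (μ : Fin k → Measure M)
    (hμ : ∀ i, IsProbabilityMeasure (μ i) ∧ Measure.map g (μ i) = μ i)
    (G : Set (Measure M))
    (hG : G = {ν | ∃ a : Fin k → ℝ, (∀ i, 0 ≤ a i) ∧ (∑ i, a i) = 1 ∧
      ν = ∑ i, ENNReal.ofReal (a i) • μ i})
    (hball : ∀ i, ∃ (c : M) (r : ℝ), 0 < r ∧ 0 < μ i (Metric.ball c r) ∧
      vol (Metric.ball c r \ basin g (μ i)) = 0)
    (hlimit : ∀ᵐ x ∂vol, ∀ ν : Measure M, IsProbabilityMeasure ν →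
      (∃ ns : ℕ → ℕ, StrictMono ns ∧ ∀ φ : C(M, ℝ),
        Tendsto (fun j : ℕ => (∑ i ∈ Finset.range (ns j), φ (g^[i] x)) / (ns j))
          atTop (nhds (∫ y, φ y ∂ν))) → ν ∈ G) :
    vol (⋃ i, basin g (μ i))ᶜ = 0 :=
  union_of_basins_full_volume_general g hg vol hqc k μ G hG hball hlimit
end
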